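/- arXiv:2309.13771 — 3 statements merged into one kernel-verified Lean document; each statement's English description precedes it below -/
import Mathlib

section
/- Let I ⊂ S = K[x_1,…,x_n] be a monomial ideal. If the polarization I^℘ is a polymatroidal ideal, then I is a polymatroidal ideal. -/
open MvPolynomial CategoryTheory

noncomputable section

namespace MatchingPowers

variable {K : Type} [Field K] {σ : Type*}

/-- The total degree of an exponent vector. -/
def degF (a : σ →₀ ℕ) : ℕ := a.sum fun _ e => e

/-- An ideal of a polynomial ring is a *monomial ideal* if it is generated by monomials. -/
def IsMonomialIdeal (I : Ideal (MvPolynomial σ K)) : Prop :=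
  ∃ A : Set (σ →₀ ℕ), I = Ideal.span ((fun a => (monomial a (1 : K) : MvPolynomial σ K)) '' A)

/-- The set of (exponent vectors of) minimal monomial generators of a monomial ideal `I`:
monomials of `I` such that no proper monomial divisor belongs to `I`. -/
def minGens (I : Ideal (MvPolynomial σ K)) : Set (σ →₀ ℕ) :=
  {a | (monomial a (1 : K) : MvPolynomial σ K) ∈ I ∧
    ∀ b : σ →₀ ℕ, (monomial b (1 : K) : MvPolynomial σ K) ∈ I → b ≤ a → b = a}

/-- The `k`-th matching power of a monomial ideal: the ideal generated by all products
`u₁ ⋯ u_k` of minimal monomial generators with pairwise disjoint supports. -/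
def matchingPower (I : Ideal (MvPolynomial σ K)) (k : ℕ) : Ideal (MvPolynomial σ K) :=
  Ideal.span {f | ∃ u : Fin k → (σ →₀ ℕ),
    (∀ i, u i ∈ minGens I) ∧
    (∀ i j, i ≠ j → Disjoint (u i).support (u j).support) ∧
    f = monomial (∑ i, u i) (1 : K)}

/-- The monomial grade `ν(I)`: the maximum size of a set of monomials of `I` with pairwise
disjoint supports. -/
def monomialGrade (I : Ideal (MvPolynomial σ K)) : ℕ :=
  sSup {k | ∃ u : Fin k → (σ →₀ ℕ), Function.Injective u ∧
    (∀ i, (monomial (u i) (1 : K) : MvPolynomial σ K) ∈ I) ∧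
    ∀ i j, i ≠ j → Disjoint (u i).support (u j).support}

/-- The initial degree of a monomial ideal: the least degree of a monomial belonging to it. -/
def indeg (I : Ideal (MvPolynomial σ K)) : ℕ :=
  sInf {d | ∃ a : σ →₀ ℕ, (monomial a (1 : K) : MvPolynomial σ K) ∈ I ∧ degF a = d}

/-- `deg_{x_i}(I)`: the maximum of the `x_i`-degrees of the minimal monomial generators. -/
def boundingDeg (I : Ideal (MvPolynomial σ K)) (i : σ) : ℕ :=
  sSup {e | ∃ a ∈ minGens I, a i = e}

/-- `|deg(I)|`: the sum of the entries of the bounding multidegree of `I`. -/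
def totalBoundingDeg [Fintype σ] (I : Ideal (MvPolynomial σ K)) : ℕ :=
  ∑ i, boundingDeg I i

/-- The maximal graded ideal `(x_i : i)` of the polynomial ring. -/
def varsIdeal (K : Type) [Field K] (σ : Type*) : Ideal (MvPolynomial σ K) :=
  Ideal.span (Set.range (X : σ → MvPolynomial σ K))

/-- The depth of `S/I`: the maximal length of a regular sequence on `S/I` consisting of
elements of the maximal graded ideal. -/
def depthQ (I : Ideal (MvPolynomial σ K)) : ℕ :=
  sSup {k | ∃ rs : List (MvPolynomial σ K), rs.length = k ∧
    (∀ r ∈ rs, r ∈ varsIdeal K σ) ∧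
    RingTheory.Sequence.IsRegular (MvPolynomial σ K ⧸ I) rs}

/-- The projective dimension of a module, defined through vanishing of `Ext`. -/
def pdim {R : Type} [CommRing R] (M : ModuleCat R) : ℕ∞ :=
  sInf {p : ℕ∞ | ∀ (N : ModuleCat R) (i : ℕ), p < (i : ℕ∞) →
    Subsingleton (((Ext R (ModuleCat R) i).obj (Opposite.op M)).obj N)}

/-- The projective dimension of an ideal, viewed as a module over the ring. -/
def pdimIdeal {R : Type} [CommRing R] (I : Ideal R) : ℕ∞ :=
  pdim (ModuleCat.of R I)

/-- The normalized depth function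
`g_I(k) = depth(S/I^{[k]}) + |deg(I)| - n - (indeg(I^{[k]}) - 1)`. -/
def gFun [Fintype σ] (I : Ideal (MvPolynomial σ K)) (k : ℕ) : ℤ :=
  (depthQ (matchingPower I k) : ℤ) + (totalBoundingDeg I : ℤ) - (Fintype.card σ : ℤ)
    - ((indeg (matchingPower I k) : ℤ) - 1)

/-- A monomial ideal is polymatroidal if it is generated in a single degree and the
exchange property holds for its minimal monomial generators: if `deg_{x_i} u > deg_{x_i} v`
then `x_j · u / x_i` is a minimal generator for some `j` with `deg_{x_j} u < deg_{x_j} v`. -/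
def IsPolymatroidal (I : Ideal (MvPolynomial σ K)) : Prop :=
  (∃ d, ∀ a ∈ minGens I, degF a = d) ∧
  ∀ a ∈ minGens I, ∀ b ∈ minGens I, ∀ i : σ, b i < a i →
    ∃ j : σ, a j < b j ∧ a + Finsupp.single j 1 - Finsupp.single i 1 ∈ minGens I

/-- The polarization of an exponent vector `a`, relative to a bound `D` on the exponents:
the squarefree exponent vector on the variables `x_{i,j}`, `j < D i`, whose `(i,j)`-entry is
`1` exactly when `j < a i`. -/
def polarizeExp [Fintype σ] (D : σ → ℕ) (a : σ →₀ ℕ) : ((i : σ) × Fin (D i)) →₀ ℕ :=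
  Finsupp.equivFunOnFinite.symm (fun p => if (p.2 : ℕ) < a p.1 then 1 else 0)

/-- The polarization of a monomial ideal `I`, relative to a bound `D` on the exponents:
the squarefree monomial ideal of `K[x_{i,j} : j < D i]` generated by the polarizations of
the minimal monomial generators of `I`. -/
def polarizedIdeal [Fintype σ] (D : σ → ℕ) (I : Ideal (MvPolynomial σ K)) :
    Ideal (MvPolynomial ((i : σ) × Fin (D i)) K) :=
  Ideal.span {f | ∃ a ∈ minGens I, f = monomial (polarizeExp D a) (1 : K)}

/-!
Polarization turns the exponent `a i` into the row of boxes `(i, 0), …, (i, a i - 1)`. It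
preserves degrees and, on exponents bounded by `D`, reflects the componentwise order, so the
minimal generators of `I^℘` are exactly the polarizations of those of `I`. Given `b i < a i`,
apply the exchange property of `I^℘` to the last box `(i, a i - 1)` of row `i`: it yields a box
`(j, t)` with `a j ≤ t < b j` such that the swapped set of boxes is again a staircase, which
forces `t = a j`; the swap is then the polarization of `x_j · u / x_i`.
-/

lemma monomial_mem_span_monomial_image_iff {S : Set (σ →₀ ℕ)} {c : σ →₀ ℕ} :
    (monomial c (1 : K) : MvPolynomial σ K) ∈
      Ideal.span ((fun a => (monomial a (1 : K) : MvPolynomial σ K)) '' S) ↔ ∃ s ∈ S, s ≤ c := by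
  classical
  simp [mem_ideal_span_monomial_image, support_monomial]

lemma minGens_finite [Finite σ] (I : Ideal (MvPolynomial σ K)) : (minGens I).Finite :=
  IsAntichain.finite_of_partiallyWellOrderedOn (fun _ ha _ hb hne hle => hne (hb.2 _ ha.1 hle))
    (Set.isPWO_of_wellQuasiOrderedLE _)

lemma apply_le_boundingDeg [Finite σ] {I : Ideal (MvPolynomial σ K)} {a : σ →₀ ℕ}
    (ha : a ∈ minGens I) (i : σ) : a i ≤ boundingDeg I i :=
  le_csSup (by simpa [Set.image] using ((minGens_finite I).image (· i)).bddAbove) ⟨a, ha, rfl⟩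

lemma degF_eq_sum [Fintype σ] (a : σ →₀ ℕ) : degF a = ∑ i, a i :=
  Finsupp.sum_fintype _ _ fun _ => rfl

lemma single_sigma_mk_apply [DecidableEq σ] {D : σ → ℕ} {i k : σ} (t : Fin (D i))
    (s : Fin (D k)) :
    Finsupp.single (⟨i, t⟩ : (i : σ) × Fin (D i)) 1 ⟨k, s⟩ =
      if i = k ∧ (t : ℕ) = s then 1 else 0 := by
  rcases eq_or_ne i k with rfl | hik
  · simp [Finsupp.single_apply, Fin.ext_iff]
  · simp [hik]

section Polarization

variable [Fintype σ] {D : σ → ℕ}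

lemma polarizeExp_apply (a : σ →₀ ℕ) (p : (i : σ) × Fin (D i)) :
    polarizeExp D a p = if (p.2 : ℕ) < a p.1 then 1 else 0 := rfl

lemma le_of_polarizeExp_le {a b : σ →₀ ℕ} (ha : ∀ i, a i ≤ D i)
    (h : polarizeExp D a ≤ polarizeExp D b) : a ≤ b := by
  intro i
  by_contra! hba
  have := h ⟨i, ⟨b i, hba.trans_le (ha i)⟩⟩
  simp [polarizeExp_apply, hba] at this

lemma polarizeExp_injOn : Set.InjOn (polarizeExp D) {a | ∀ i, a i ≤ D i} :=
  fun _ ha _ hb h => le_antisymm (le_of_polarizeExp_le ha h.le) (le_of_polarizeExp_le hb h.ge)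

lemma degF_polarizeExp {a : σ →₀ ℕ} (ha : ∀ i, a i ≤ D i) :
    degF (polarizeExp D a) = degF a := by
  rw [degF_eq_sum, degF_eq_sum, ← Finset.univ_sigma_univ, Finset.sum_sigma]
  refine Finset.sum_congr rfl fun i _ => ?_
  simp only [polarizeExp_apply, Finset.sum_boole, Fin.card_filter_val_lt]
  simp [ha i]

lemma mem_polarizedIdeal_iff {I : Ideal (MvPolynomial σ K)} {c : ((i : σ) × Fin (D i)) →₀ ℕ} :
    (monomial c (1 : K) : MvPolynomial ((i : σ) × Fin (D i)) K) ∈ polarizedIdeal D I ↔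
      ∃ a ∈ minGens I, polarizeExp D a ≤ c := by
  have hgens : {f | ∃ a ∈ minGens I, f = monomial (polarizeExp D a) (1 : K)} =
      (fun e => (monomial e (1 : K) : MvPolynomial ((i : σ) × Fin (D i)) K)) ''
        (polarizeExp D '' minGens I) := by
    ext f
    simp [eq_comm]
  simp [polarizedIdeal, hgens, monomial_mem_span_monomial_image_iff]

lemma minGens_polarizedIdeal {I : Ideal (MvPolynomial σ K)}
    (hD : ∀ a ∈ minGens I, ∀ i, a i ≤ D i) :
    minGens (polarizedIdeal D I) = polarizeExp D '' minGens I := by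
  ext c
  constructor
  · rintro ⟨hc, hmin⟩
    obtain ⟨a, ha, hac⟩ := mem_polarizedIdeal_iff.1 hc
    exact ⟨a, ha, hmin _ (mem_polarizedIdeal_iff.2 ⟨a, ha, le_rfl⟩) hac⟩
  · rintro ⟨a, ha, rfl⟩
    refine ⟨mem_polarizedIdeal_iff.2 ⟨a, ha, le_rfl⟩, fun b hb hba => ?_⟩
    obtain ⟨a', ha', ha'b⟩ := mem_polarizedIdeal_iff.1 hb
    obtain rfl : a' = a := ha.2 a' ha'.1 (le_of_polarizeExp_le (hD a' ha') (ha'b.trans hba))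
    exact le_antisymm hba ha'b

lemma polarizeExp_add_single_sub_single [DecidableEq σ] {a : σ →₀ ℕ} {i j : σ} (hij : i ≠ j)
    (hi : a i - 1 < D i) (hj : a j < D j) :
    polarizeExp D (a + Finsupp.single j 1 - Finsupp.single i 1) =
      polarizeExp D a + Finsupp.single ⟨j, ⟨a j, hj⟩⟩ 1 -
        Finsupp.single ⟨i, ⟨a i - 1, hi⟩⟩ 1 := by
  ext ⟨k, s⟩
  simp only [Finsupp.tsub_apply, Finsupp.add_apply, single_sigma_mk_apply, polarizeExp_apply]
  by_cases hkj : j = k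
  · subst hkj
    simp only [Finsupp.single_apply, hij, false_and, if_false, true_and, if_true, tsub_zero]
    split_ifs <;> omega
  by_cases hki : i = k
  · subst hki
    simp only [Finsupp.single_apply, hkj, false_and, if_false, true_and, if_true, add_zero]
    split_ifs <;> omega
  simp [hki, hkj, Finsupp.single_eq_of_ne, Ne.symm hki, Ne.symm hkj]

lemma eq_add_single_sub_single_of_polarizeExp_eq [DecidableEq σ] {a c : σ →₀ ℕ} {i j : σ}
    {t : ℕ} (ha : ∀ k, a k ≤ D k) (hc : ∀ k, c k ≤ D k) (hij : i ≠ j) (hi : a i - 1 < D i)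
    (ht : t < D j) (hat : a j ≤ t)
    (hceq : polarizeExp D c =
      polarizeExp D a + Finsupp.single ⟨j, ⟨t, ht⟩⟩ 1 - Finsupp.single ⟨i, ⟨a i - 1, hi⟩⟩ 1) :
    c = a + Finsupp.single j 1 - Finsupp.single i 1 := by
  -- the staircase `polarizeExp D c` contains `(j, t)`, hence `(j, a j)`,
  -- which only the new box can fill
  have hta : t = a j := by
    have h1 := DFunLike.congr_fun hceq ⟨j, ⟨t, ht⟩⟩
    have h2 := DFunLike.congr_fun hceq ⟨j, ⟨a j, hat.trans_lt ht⟩⟩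
    simp only [polarizeExp_apply, Finsupp.tsub_apply, Finsupp.add_apply, single_sigma_mk_apply,
      hij, false_and, if_false, true_and, if_true, tsub_zero] at h1 h2
    split_ifs at h1 h2 <;> omega
  subst hta
  rw [← polarizeExp_add_single_sub_single hij hi ht] at hceq
  refine polarizeExp_injOn hc (fun k => ?_) hceq
  have := ha k
  rcases eq_or_ne j k with rfl | hjk
  · simp [hij]
    omega
  · simp [Finsupp.single_apply, hjk]
    omega

lemma polarizeExp_lt_polarizeExp_iff {a b : σ →₀ ℕ} {k : σ} {s : ℕ} (hs : s < D k) :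
    polarizeExp D a ⟨k, ⟨s, hs⟩⟩ < polarizeExp D b ⟨k, ⟨s, hs⟩⟩ ↔ a k ≤ s ∧ s < b k := by
  simp only [polarizeExp_apply]
  split_ifs <;> omega

theorem IsPolymatroidal.of_polarizedIdeal {I : Ideal (MvPolynomial σ K)}
    (hD : ∀ a ∈ minGens I, ∀ i, a i ≤ D i) (hpol : IsPolymatroidal (polarizedIdeal D I)) :
    IsPolymatroidal I := by
  classical
  have hmg := minGens_polarizedIdeal hD
  have hpolMem {a : σ →₀ ℕ} (ha : a ∈ minGens I) :
      polarizeExp D a ∈ minGens (polarizedIdeal D I) :=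
    hmg ▸ Set.mem_image_of_mem _ ha
  obtain ⟨⟨d, hd⟩, hex⟩ := hpol
  refine ⟨⟨d, fun a ha => degF_polarizeExp (hD a ha) ▸ hd _ (hpolMem ha)⟩,
    fun a ha b hb i hba => ?_⟩
  have hai : a i - 1 < D i := by have := hD a ha i; omega
  obtain ⟨⟨j, t, htD⟩, hjt, hexch⟩ :=
    hex _ (hpolMem ha) _ (hpolMem hb) ⟨i, ⟨a i - 1, hai⟩⟩
      ((polarizeExp_lt_polarizeExp_iff hai).2 (by omega))
  obtain ⟨hat, htb⟩ := (polarizeExp_lt_polarizeExp_iff htD).1 hjt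
  have hij : i ≠ j := by rintro rfl; omega
  obtain ⟨c, hc, hceq⟩ := hmg ▸ hexch
  refine ⟨j, by omega, ?_⟩
  rwa [← eq_add_single_sub_single_of_polarizeExp_eq (hD a ha) (hD c hc) hij hai htD hat hceq]

end Polarization

theorem isPolymatroidal_of_polarizedIdeal_general (n : ℕ) (K : Type) [Field K]
    (I : Ideal (MvPolynomial (Fin n) K))
    (hpol : IsPolymatroidal (polarizedIdeal (boundingDeg I) I)) :
    IsPolymatroidal I :=
  IsPolymatroidal.of_polarizedIdeal (fun _ ha => apply_le_boundingDeg ha) hpol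

/-- If the polarization `I^℘` of a monomial ideal `I` is polymatroidal,
then `I` is polymatroidal. -/
theorem isPolymatroidal_of_polarizedIdeal (n : ℕ) (K : Type) [Field K]
    (I : Ideal (MvPolynomial (Fin n) K)) (hI : IsMonomialIdeal I)
    (hpol : IsPolymatroidal (polarizedIdeal (boundingDeg I) I)) :
    IsPolymatroidal I :=
  isPolymatroidal_of_polarizedIdeal_general n K I hpol

end MatchingPowers
end
end

section
/- Let I be a monomial ideal and 1 ≤ k < ν(I). Suppose the k-th matching power I^{[k]} is generated in a single degree. Then there is an integer d such that: (a) I^{[k]} is generated in degree dk; (b) I^{[k+1]} is generated in degree d(k+1); and (c) whenever u = u_1⋯u_{k+1} is a minimal generator of I^{[k+1]} with each u_i a minimal generator of I and gcd(u_i, u_j) = 1 for i ≠ j, then deg(u_i) = d for each i. -/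
open MvPolynomial CategoryTheory

noncomputable section

namespace MatchingPowers

variable {K : Type} [Field K] {σ : Type*}

/-! If `u₁ ⋯ u_{k+1}` is a minimal generator of `I^{[k+1]}`, deleting any factor `uᵢ` leaves a
minimal generator of `I^{[k]}`: a minimal generator of `I^{[k]}` dividing the rest is still
coprime to `uᵢ`, and multiplying it back by `uᵢ` gives an element of `I^{[k+1]}` dividing
`u₁ ⋯ u_{k+1}`, hence equal to it. So if `I^{[k]}` is generated in degree `e`, then
`deg uᵢ = deg(u₁ ⋯ u_{k+1}) - e` is independent of `i`, and this common degree `d` satisfies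
`k d = e`. Since `k < ν(I)`, the ideal `I^{[k+1]}` has a minimal generator, which pins `d` down. -/

lemma degF_add (a b : σ →₀ ℕ) : degF (a + b) = degF a + degF b :=
  map_add Finsupp.degree a b

lemma degF_sum {ι : Type*} (s : Finset ι) (f : ι → σ →₀ ℕ) :
    degF (∑ i ∈ s, f i) = ∑ i ∈ s, degF (f i) :=
  map_sum Finsupp.degree f s

variable {I : Ideal (MvPolynomial σ K)}

lemma exists_mem_minGens_le {a : σ →₀ ℕ} (ha : monomial a (1 : K) ∈ I) :
    ∃ b ∈ minGens I, b ≤ a := by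
  obtain ⟨b, ⟨hbI, hba⟩, hmin⟩ :=
    wellFounded_lt.has_min {b | monomial b (1 : K) ∈ I ∧ b ≤ a} ⟨a, ha, le_rfl⟩
  refine ⟨b, ⟨hbI, fun c hcI hcb => ?_⟩, hba⟩
  by_contra hne
  exact hmin c ⟨hcI, hcb.trans hba⟩ (lt_of_le_of_ne hcb hne)

def IsGenMatching {ι : Type*} (I : Ideal (MvPolynomial σ K)) (u : ι → σ →₀ ℕ) : Prop :=
  (∀ i, u i ∈ minGens I) ∧ Pairwise fun i j => Disjoint (u i).support (u j).support

lemma IsGenMatching.comp {ι κ : Type*} {u : ι → σ →₀ ℕ} (hu : IsGenMatching I u)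
    {f : κ → ι} (hf : f.Injective) : IsGenMatching I (u ∘ f) :=
  ⟨fun i => hu.1 (f i), fun _ _ hij => hu.2 (hf.ne hij)⟩

lemma IsGenMatching.cons {k : ℕ} {a : σ →₀ ℕ} {w : Fin k → σ →₀ ℕ} (ha : a ∈ minGens I)
    (hw : IsGenMatching I w) (hdisj : ∀ j, Disjoint a.support (w j).support) :
    IsGenMatching I (Fin.cons a w : Fin (k + 1) → σ →₀ ℕ) := by
  refine ⟨Fin.cases ha hw.1, fun p q hpq => ?_⟩
  cases p using Fin.cases <;> cases q using Fin.cases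
  · exact absurd rfl hpq
  · exact hdisj _
  · exact (hdisj _).symm
  · exact hw.2 fun h => hpq (congrArg Fin.succ h)

lemma monomial_mem_matchingPower_iff {k : ℕ} {a : σ →₀ ℕ} :
    monomial a (1 : K) ∈ matchingPower I k ↔
      ∃ u : Fin k → σ →₀ ℕ, IsGenMatching I u ∧ ∑ i, u i ≤ a := by
  have hspan : matchingPower I k = Ideal.span ((fun b => monomial b (1 : K)) ''
      ((fun u : Fin k → σ →₀ ℕ => ∑ i, u i) '' {u | IsGenMatching I u})) := by
    unfold matchingPower
    rw [Set.image_image]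
    congr 1
    ext f
    exact ⟨fun ⟨u, h1, h2, hf⟩ => ⟨u, ⟨h1, h2⟩, hf.symm⟩,
      fun ⟨u, hu, hf⟩ => ⟨u, hu.1, hu.2, hf.symm⟩⟩
  classical
  rw [hspan, mem_ideal_span_monomial_image, support_monomial, if_neg one_ne_zero]
  simp only [Finset.mem_singleton, forall_eq, Set.mem_image, Set.mem_ofPred_eq]
  exact ⟨fun ⟨_, ⟨u, hu, hb⟩, hle⟩ => ⟨u, hu, hb ▸ hle⟩,
    fun ⟨u, hu, hle⟩ => ⟨_, ⟨u, hu, rfl⟩, hle⟩⟩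

lemma sum_mem_matchingPower {k : ℕ} {u : Fin k → σ →₀ ℕ} (hu : IsGenMatching I u) :
    monomial (∑ i, u i) (1 : K) ∈ matchingPower I k :=
  monomial_mem_matchingPower_iff.2 ⟨u, hu, le_rfl⟩

lemma exists_eq_sum_of_mem_minGens_matchingPower {k : ℕ} {a : σ →₀ ℕ}
    (ha : a ∈ minGens (matchingPower I k)) :
    ∃ u : Fin k → σ →₀ ℕ, IsGenMatching I u ∧ a = ∑ i, u i := by
  obtain ⟨u, hu, hle⟩ := monomial_mem_matchingPower_iff.1 ha.1
  exact ⟨u, hu, (ha.2 _ (sum_mem_matchingPower hu) hle).symm⟩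

lemma sum_succAbove_mem_minGens_matchingPower {k : ℕ} {u : Fin (k + 1) → σ →₀ ℕ}
    (hu : IsGenMatching I u) (hmin : ∑ i, u i ∈ minGens (matchingPower I (k + 1)))
    (i : Fin (k + 1)) : ∑ j, u (i.succAbove j) ∈ minGens (matchingPower I k) := by
  classical
  obtain ⟨c, hc, hcle⟩ :=
    exists_mem_minGens_le (sum_mem_matchingPower (hu.comp Fin.succAbove_right_injective))
  obtain ⟨w, hw, rfl⟩ := exists_eq_sum_of_mem_minGens_matchingPower hc
  have hdisj_rest : Disjoint (u i).support (∑ j, u (i.succAbove j)).support :=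
    Finset.disjoint_of_subset_right Finsupp.support_finsetSum
      ((Finset.disjoint_biUnion_right _ _ _).2 fun j _ => hu.2 (Fin.succAbove_ne i j).symm)
  have hdisj : ∀ j, Disjoint (u i).support (w j).support := fun j =>
    hdisj_rest.mono_right <| Finsupp.support_mono <|
      (Finset.single_le_sum (fun _ _ => zero_le) (Finset.mem_univ j)).trans hcle
  have hmem := sum_mem_matchingPower (K := K) (hw.cons (hu.1 i) hdisj)
  rw [Fin.sum_cons] at hmem
  have heq := hmin.2 _ hmem (by rw [Fin.sum_univ_succAbove u i]; exact add_le_add_right hcle _)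
  rw [Fin.sum_univ_succAbove u i] at heq
  rw [← add_left_cancel heq]
  exact hc

lemma mul_degF_eq_of_sum_mem_minGens {k e : ℕ}
    (he : ∀ a ∈ minGens (matchingPower I k), degF a = e) {u : Fin (k + 1) → σ →₀ ℕ}
    (hu : IsGenMatching I u) (hmin : ∑ i, u i ∈ minGens (matchingPower I (k + 1)))
    (i : Fin (k + 1)) : k * degF (u i) = e := by
  have hsplit : ∀ j, degF (∑ p, u p) = degF (u j) + e := fun j => by
    rw [Fin.sum_univ_succAbove u j, degF_add,
      he _ (sum_succAbove_mem_minGens_matchingPower hu hmin j)]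
  have hconst : ∀ j, degF (u j) = degF (u i) := fun j => by
    have := hsplit i; have := hsplit j; omega
  calc k * degF (u i) = ∑ j : Fin k, degF (u (i.succAbove j)) := by simp [hconst]
    _ = e := by rw [← degF_sum, he _ (sum_succAbove_mem_minGens_matchingPower hu hmin i)]

lemma exists_isGenMatching_of_lt_monomialGrade {k : ℕ} (hk : k < monomialGrade I) :
    ∃ u : Fin (k + 1) → σ →₀ ℕ, IsGenMatching I u := by
  obtain ⟨m, ⟨v, -, hvI, hvdisj⟩, hkm⟩ := exists_lt_of_lt_csSup' hk
  choose g hg hgv using fun i => exists_mem_minGens_le (hvI i)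
  have hgm : IsGenMatching I g := ⟨hg, fun i j hij =>
    (hvdisj i j hij).mono (Finsupp.support_mono (hgv i)) (Finsupp.support_mono (hgv j))⟩
  exact ⟨_, hgm.comp (Fin.castLE_injective hkm)⟩

theorem matchingPower_single_degree_general (n : ℕ) (K : Type) [Field K]
    (I : Ideal (MvPolynomial (Fin n) K))
    (k : ℕ) (hk1 : 1 ≤ k) (hk2 : k < monomialGrade I)
    (hsingle : ∃ e, ∀ a ∈ minGens (matchingPower I k), degF a = e) :
    ∃ d : ℕ,
      (∀ a ∈ minGens (matchingPower I k), degF a = d * k) ∧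
      (∀ a ∈ minGens (matchingPower I (k + 1)), degF a = d * (k + 1)) ∧
      (∀ u : Fin (k + 1) → (Fin n →₀ ℕ),
        (∀ i, u i ∈ minGens I) →
        (∀ i j, i ≠ j → Disjoint (u i).support (u j).support) →
        (∑ i, u i) ∈ minGens (matchingPower I (k + 1)) →
        ∀ i, degF (u i) = d) := by
  obtain ⟨e, he⟩ := hsingle
  obtain ⟨v, hv⟩ := exists_isGenMatching_of_lt_monomialGrade hk2
  obtain ⟨a₀, ha₀, -⟩ := exists_mem_minGens_le (sum_mem_matchingPower (K := K) hv)
  obtain ⟨u₀, hu₀, rfl⟩ := exists_eq_sum_of_mem_minGens_matchingPower ha₀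
  have hke := mul_degF_eq_of_sum_mem_minGens he hu₀ ha₀ 0
  have hdeg : ∀ u : Fin (k + 1) → Fin n →₀ ℕ, IsGenMatching I u →
      ∑ i, u i ∈ minGens (matchingPower I (k + 1)) → ∀ i, degF (u i) = degF (u₀ 0) :=
    fun u hu hmin i =>
      Nat.eq_of_mul_eq_mul_left hk1 ((mul_degF_eq_of_sum_mem_minGens he hu hmin i).trans hke.symm)
  refine ⟨degF (u₀ 0), fun a ha => ?_, fun a ha => ?_, fun u h1 h2 hmin => hdeg u ⟨h1, h2⟩ hmin⟩
  · rw [he a ha, mul_comm, hke]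
  · obtain ⟨u, hu, rfl⟩ := exists_eq_sum_of_mem_minGens_matchingPower ha
    rw [degF_sum, Finset.sum_congr rfl fun i _ => hdeg u hu ha i]
    simp [mul_comm]

/-- If `1 ≤ k < ν(I)` and `I^{[k]}` is generated in a single degree, then
there is `d` such that `I^{[k]}` is generated in degree `dk`, `I^{[k+1]}` is generated in
degree `d(k+1)`, and every support-disjoint factorization of a minimal generator of
`I^{[k+1]}` into `k+1` minimal generators of `I` consists of monomials of degree `d`. -/
theorem matchingPower_single_degree (n : ℕ) (K : Type) [Field K]
    (I : Ideal (MvPolynomial (Fin n) K)) (hI : IsMonomialIdeal I)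
    (k : ℕ) (hk1 : 1 ≤ k) (hk2 : k < monomialGrade I)
    (hsingle : ∃ e, ∀ a ∈ minGens (matchingPower I k), degF a = e) :
    ∃ d : ℕ,
      (∀ a ∈ minGens (matchingPower I k), degF a = d * k) ∧
      (∀ a ∈ minGens (matchingPower I (k + 1)), degF a = d * (k + 1)) ∧
      (∀ u : Fin (k + 1) → (Fin n →₀ ℕ),
        (∀ i, u i ∈ minGens I) →
        (∀ i j, i ≠ j → Disjoint (u i).support (u j).support) →
        (∑ i, u i) ∈ minGens (matchingPower I (k + 1)) →
        ∀ i, degF (u i) = d) :=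
  matchingPower_single_degree_general n K I k hk1 hk2 hsingle

end MatchingPowers
end
end

section
/- Let D be a weighted oriented graph with underlying simple graph G such that every subgraph of G has at most one perfect matching, and let 1 ≤ k ≤ ν(I(D)). Then a monomial u is a minimal monomial generator of I(D)^{[k]} if and only if u = x_{a_1} x_{b_1}^{w(b_1)} ⋯ x_{a_k} x_{b_k}^{w(b_k)} for some directed edges (a_1,b_1),…,(a_k,b_k) ∈ E(D) such that {{a_1,b_1},…,{a_k,b_k}} is a matching of G of size k. -/
open MvPolynomial CategoryTheory

noncomputable section

namespace MatchingPowers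

variable {K : Type} [Field K] {σ : Type*}

/-- A vertex-weighted oriented graph: a simple graph without isolated vertices, together with
an orientation of each edge and positive integer weights on the vertices, where every source
(vertex with no incoming directed edge) has weight `1`. -/
structure WOGraph (V : Type*) where
  /-- the underlying simple graph -/
  graph : SimpleGraph V
  /-- the orientation: `dir i j` means there is a directed edge from `i` to `j` -/
  dir : V → V → Prop
  /-- the weight function -/
  w : V → ℕ
  dir_adj : ∀ ⦃i j⦄, dir i j → graph.Adj i j
  adj_dir : ∀ ⦃i j⦄, graph.Adj i j → dir i j ∨ dir j i
  not_both : ∀ ⦃i j⦄, dir i j → ¬ dir j i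
  one_le_w : ∀ i, 1 ≤ w i
  source_w : ∀ i, (∀ j, ¬ dir j i) → w i = 1
  no_isolated : ∀ i, ∃ j, graph.Adj i j

variable {V : Type*}

/-- The edge ideal of a weighted oriented graph: generated by the monomials `x_i x_j^{w j}`
for the directed edges `(i,j)`. -/
def edgeIdealD (K : Type) [Field K] (D : WOGraph V) : Ideal (MvPolynomial V K) :=
  Ideal.span {f | ∃ i j, D.dir i j ∧
    f = monomial (Finsupp.single i 1 + Finsupp.single j (D.w j)) (1 : K)}

/-- The edge ideal of a simple graph: generated by the monomials `x_i x_j` for the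
edges `{i,j}`. -/
def edgeIdealG (K : Type) [Field K] (G : SimpleGraph V) : Ideal (MvPolynomial V K) :=
  Ideal.span {f | ∃ i j, G.Adj i j ∧
    f = monomial (Finsupp.single i 1 + Finsupp.single j 1) (1 : K)}

/-- A finite set of edges of `G` which are pairwise disjoint. -/
def IsMatchingSet (G : SimpleGraph V) (M : Finset (Sym2 V)) : Prop :=
  (∀ e ∈ M, e ∈ G.edgeSet) ∧ ∀ e ∈ M, ∀ f ∈ M, e ≠ f → ∀ v, v ∈ e → v ∉ f

/-- The matching number of a simple graph: the maximum size of a matching. -/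
def matchingNumber (G : SimpleGraph V) : ℕ :=
  sSup {k | ∃ M : Finset (Sym2 V), IsMatchingSet G M ∧ M.card = k}

/-- Every subgraph of `G` has at most one perfect matching (a perfect matching of a subgraph
`H` being a matching `M ≤ H` whose vertex set is all of `H.verts`). -/
def HasAtMostOnePerfectMatching (G : SimpleGraph V) : Prop :=
  ∀ H M₁ M₂ : G.Subgraph,
    M₁ ≤ H → M₁.verts = H.verts → M₁.IsMatching →
    M₂ ≤ H → M₂.verts = H.verts → M₂.IsMatching → M₁ = M₂

/-- The maximal number of edges of an induced path in `G`. -/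
def maxInducedPathLength (G : SimpleGraph V) : ℕ :=
  sSup {m | ∃ p : Fin (m + 1) → V, Function.Injective p ∧
    ∀ i j : Fin (m + 1), G.Adj (p i) (p j) ↔ ((i : ℕ) + 1 = j ∨ (j : ℕ) + 1 = i)}

/-! The minimal generators of an ideal spanned by a set `A` of monomials are the minimal
elements of `A`. So the minimal generators of `I(D)^{[k]}` are the minimal ones among the
monomials `x_{a_1} x_{b_1}^{w(b_1)} ⋯ x_{a_k} x_{b_k}^{w(b_k)}` of directed matchings of size `k`,
and it suffices to show that no such monomial properly divides another. If the monomial of `N`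
divides that of `M`, the vertex set of `N` lies in that of `M`; both have `2k` elements, so `M`
and `N` are perfect matchings of the subgraph `M ∪ N` and hence coincide. Since each edge has a
single orientation, their monomials coincide as well. -/

section MonomialIdeal

theorem monomial_mem_span_monomial_iff {A : Set (σ →₀ ℕ)} {a : σ →₀ ℕ} :
    (monomial a (1 : K) : MvPolynomial σ K) ∈
        Ideal.span ((fun e => (monomial e (1 : K) : MvPolynomial σ K)) '' A) ↔
      ∃ e ∈ A, e ≤ a := by
  classical
  rw [mem_ideal_span_monomial_image]
  simp [support_monomial]

theorem mem_minGens_span_monomial_iff {A : Set (σ →₀ ℕ)} {a : σ →₀ ℕ} :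
    a ∈ minGens (Ideal.span ((fun e => (monomial e (1 : K) : MvPolynomial σ K)) '' A)) ↔
      a ∈ A ∧ ∀ b ∈ A, b ≤ a → b = a := by
  simp only [minGens, Set.mem_ofPred_eq, monomial_mem_span_monomial_iff]
  constructor
  · rintro ⟨⟨e, he, hea⟩, hmin⟩
    have hmin' : ∀ b ∈ A, b ≤ a → b = a := fun b hb hba => hmin b ⟨b, hb, le_rfl⟩ hba
    exact ⟨hmin' e he hea ▸ he, hmin'⟩
  · rintro ⟨ha, hmin⟩
    refine ⟨⟨a, ha, le_rfl⟩, fun b ⟨e, he, heb⟩ hba => le_antisymm hba ?_⟩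
    exact hmin e he (heb.trans hba) ▸ heb

def matchingExps (I : Ideal (MvPolynomial σ K)) (k : ℕ) : Set (σ →₀ ℕ) :=
  {s | ∃ u : Fin k → σ →₀ ℕ, (∀ i, u i ∈ minGens I) ∧
    (∀ i j, i ≠ j → Disjoint (u i).support (u j).support) ∧ s = ∑ i, u i}

theorem matchingPower_eq_span (I : Ideal (MvPolynomial σ K)) (k : ℕ) :
    matchingPower I k =
      Ideal.span ((fun e => (monomial e (1 : K) : MvPolynomial σ K)) '' matchingExps I k) := by
  unfold matchingPower
  congr 1
  ext f
  constructor
  · rintro ⟨u, hu, hdisj, rfl⟩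
    exact ⟨_, ⟨u, hu, hdisj, rfl⟩, rfl⟩
  · rintro ⟨_, ⟨u, hu, hdisj, rfl⟩, rfl⟩
    exact ⟨u, hu, hdisj, rfl⟩

end MonomialIdeal

theorem disjoint_pair_iff [DecidableEq V] {i j i' j' : V} :
    Disjoint ({i, j} : Finset V) {i', j'} ↔ i ≠ i' ∧ i ≠ j' ∧ j ≠ i' ∧ j ≠ j' := by
  simp only [Finset.disjoint_insert_left, Finset.disjoint_singleton_left, Finset.mem_insert,
    Finset.mem_singleton, not_or]
  tauto

namespace WOGraph

variable (D : WOGraph V)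

def edgeExp (i j : V) : V →₀ ℕ := Finsupp.single i 1 + Finsupp.single j (D.w j)

theorem edgeIdealD_eq_span :
    edgeIdealD K D = Ideal.span ((fun e => (monomial e (1 : K) : MvPolynomial V K)) ''
      {e | ∃ i j, D.dir i j ∧ e = D.edgeExp i j}) := by
  unfold edgeIdealD
  congr 1
  ext f
  constructor
  · rintro ⟨i, j, hij, rfl⟩
    exact ⟨_, ⟨i, j, hij, rfl⟩, rfl⟩
  · rintro ⟨_, ⟨i, j, hij, rfl⟩, rfl⟩
    exact ⟨i, j, hij, rfl⟩

theorem support_edgeExp [DecidableEq V] {i j : V} (h : D.dir i j) :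
    (D.edgeExp i j).support = {i, j} := by
  have hw : D.w j ≠ 0 := Nat.one_le_iff_ne_zero.mp (D.one_le_w j)
  rw [edgeExp, Finsupp.support_add_eq, Finsupp.support_single _ one_ne_zero,
    Finsupp.support_single _ hw, Finset.insert_eq]
  exact (Finsupp.support_single_disjoint one_ne_zero hw).2 (D.dir_adj h).ne

theorem eq_of_edgeExp_le {i j i' j' : V} (h : D.dir i j) (h' : D.dir i' j')
    (hle : D.edgeExp i j ≤ D.edgeExp i' j') : i = i' ∧ j = j' := by
  classical
  have hsub := Finsupp.support_mono hle
  rw [D.support_edgeExp h, D.support_edgeExp h', Finset.insert_subset_iff,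
    Finset.singleton_subset_iff] at hsub
  simp only [Finset.mem_insert, Finset.mem_singleton] at hsub
  have hij := (D.dir_adj h).ne
  rcases hsub with ⟨rfl | rfl, rfl | rfl⟩
  · exact absurd rfl hij
  · exact ⟨rfl, rfl⟩
  · exact absurd h' (D.not_both h)
  · exact absurd rfl hij

theorem minGens_edgeIdealD :
    minGens (edgeIdealD K D) = {e | ∃ i j, D.dir i j ∧ e = D.edgeExp i j} := by
  ext e
  rw [edgeIdealD_eq_span, mem_minGens_span_monomial_iff]
  refine ⟨And.left, fun he => ⟨he, ?_⟩⟩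
  obtain ⟨i, j, hij, rfl⟩ := he
  rintro _ ⟨i', j', hij', rfl⟩ hle
  obtain ⟨rfl, rfl⟩ := D.eq_of_edgeExp_le hij' hij hle
  rfl

def IsDirectedMatching {k : ℕ} (a b : Fin k → V) : Prop :=
  (∀ i, D.dir (a i) (b i)) ∧ ∀ i j, i ≠ j → a i ≠ a j ∧ a i ≠ b j ∧ b i ≠ a j ∧ b i ≠ b j

def matchingExp {k : ℕ} (a b : Fin k → V) : V →₀ ℕ := ∑ i, D.edgeExp (a i) (b i)

theorem matchingExps_edgeIdealD (k : ℕ) :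
    matchingExps (edgeIdealD K D) k =
      {s | ∃ a b : Fin k → V, D.IsDirectedMatching a b ∧ s = D.matchingExp a b} := by
  classical
  ext s
  simp only [matchingExps, minGens_edgeIdealD, Set.mem_ofPred_eq]
  constructor
  · rintro ⟨u, hu, hdisj, rfl⟩
    choose a b hdir hu using hu
    obtain rfl : u = fun i => D.edgeExp (a i) (b i) := funext hu
    refine ⟨a, b, ⟨hdir, fun i j hij => ?_⟩, rfl⟩
    simpa only [D.support_edgeExp (hdir _), disjoint_pair_iff] using hdisj i j hij
  · rintro ⟨a, b, ⟨hdir, hdisj⟩, rfl⟩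
    refine ⟨fun i => D.edgeExp (a i) (b i), fun i => ⟨a i, b i, hdir i, rfl⟩,
      fun i j hij => ?_, rfl⟩
    simpa only [D.support_edgeExp (hdir _), disjoint_pair_iff] using hdisj i j hij

theorem matchingExp_comp {k : ℕ} (a b : Fin k → V) {f : Fin k → Fin k}
    (hf : Function.Bijective f) : D.matchingExp (a ∘ f) (b ∘ f) = D.matchingExp a b :=
  hf.sum_comp fun i => D.edgeExp (a i) (b i)

namespace IsDirectedMatching

variable {D} {k : ℕ} {a b c d : Fin k → V}

theorem injective_left (h : D.IsDirectedMatching a b) : Function.Injective a :=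
  fun i j hij => by_contra fun hne => (h.2 i j hne).1 hij

theorem disjoint_pair [DecidableEq V] (h : D.IsDirectedMatching a b) {i j : Fin k}
    (hij : i ≠ j) : Disjoint ({a i, b i} : Finset V) {a j, b j} :=
  disjoint_pair_iff.2 (h.2 i j hij)

theorem support_matchingExp [DecidableEq V] (h : D.IsDirectedMatching a b) :
    (D.matchingExp a b).support = Finset.univ.biUnion fun i => {a i, b i} := by
  rw [matchingExp, Finsupp.support_sum_eq_biUnion]
  · simp only [D.support_edgeExp (h.1 _)]
  · intro i j hij
    simpa only [D.support_edgeExp (h.1 _)] using h.disjoint_pair hij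

theorem card_support_matchingExp [DecidableEq V] (h : D.IsDirectedMatching a b) :
    (D.matchingExp a b).support.card = 2 * k := by
  rw [h.support_matchingExp, Finset.card_biUnion fun i _ j _ hij => h.disjoint_pair hij]
  simp [Finset.card_pair (D.dir_adj (h.1 _)).ne, mul_comm]

def subgraph (h : D.IsDirectedMatching a b) : D.graph.Subgraph :=
  ⨆ i, D.graph.subgraphOfAdj (D.dir_adj (h.1 i))

theorem verts_subgraph [DecidableEq V] (h : D.IsDirectedMatching a b) :
    h.subgraph.verts = (D.matchingExp a b).support := by
  ext v
  simp [subgraph, h.support_matchingExp]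

theorem subgraph_adj (h : D.IsDirectedMatching a b) {x y : V} :
    h.subgraph.Adj x y ↔ ∃ i, s(a i, b i) = s(x, y) := by
  simp [subgraph]

theorem isMatching_subgraph (h : D.IsDirectedMatching a b) : h.subgraph.IsMatching := by
  classical
  refine SimpleGraph.Subgraph.IsMatching.iSup (fun i => .subgraphOfAdj _) fun i j hij => ?_
  dsimp only
  rw [(SimpleGraph.Subgraph.IsMatching.subgraphOfAdj _).support_eq_verts,
    (SimpleGraph.Subgraph.IsMatching.subgraphOfAdj _).support_eq_verts]
  simpa using h.disjoint_pair hij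

theorem matchingExp_eq_of_le (hpm : HasAtMostOnePerfectMatching D.graph)
    (hab : D.IsDirectedMatching a b) (hcd : D.IsDirectedMatching c d)
    (hle : D.matchingExp c d ≤ D.matchingExp a b) : D.matchingExp c d = D.matchingExp a b := by
  classical
  have hsupp : (D.matchingExp c d).support = (D.matchingExp a b).support :=
    Finset.eq_of_subset_of_card_le (Finsupp.support_mono hle)
      (by rw [hab.card_support_matchingExp, hcd.card_support_matchingExp])
  have hverts : hcd.subgraph.verts = hab.subgraph.verts := by
    rw [hab.verts_subgraph, hcd.verts_subgraph, hsupp]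
  have hM : hab.subgraph = hcd.subgraph :=
    hpm _ _ _ le_sup_left (by simp [hverts]) hab.isMatching_subgraph
      le_sup_right (by simp [hverts]) hcd.isMatching_subgraph
  have hedge : ∀ i, ∃ j, c j = a i ∧ d j = b i := by
    intro i
    obtain ⟨j, hj⟩ := hcd.subgraph_adj.1 (hM ▸ hab.subgraph_adj.2 ⟨i, rfl⟩)
    rcases Sym2.eq_iff.1 hj with ⟨hc, hd⟩ | ⟨hc, hd⟩
    · exact ⟨j, hc, hd⟩
    · exact absurd (hc ▸ hd ▸ hcd.1 j) (D.not_both (hab.1 i))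
  choose f hfc hfd using hedge
  have hf : Function.Bijective f := Finite.injective_iff_bijective.1 fun i i' hii' =>
    hab.injective_left (by rw [← hfc, ← hfc, hii'])
  rw [← show c ∘ f = a from funext hfc, ← show d ∘ f = b from funext hfd,
    D.matchingExp_comp c d hf]

end IsDirectedMatching

end WOGraph

theorem minGens_matchingPower_iff_general (V : Type) (K : Type) [Field K]
    (D : WOGraph V) (hpm : HasAtMostOnePerfectMatching D.graph)
    (k : ℕ) (u : V →₀ ℕ) :
    u ∈ minGens (matchingPower (edgeIdealD K D) k) ↔
      ∃ a b : Fin k → V,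
        (∀ i, D.dir (a i) (b i)) ∧
        (∀ i j, i ≠ j → a i ≠ a j ∧ a i ≠ b j ∧ b i ≠ a j ∧ b i ≠ b j) ∧
        u = ∑ i, (Finsupp.single (a i) 1 + Finsupp.single (b i) (D.w (b i))) := by
  rw [matchingPower_eq_span, mem_minGens_span_monomial_iff, D.matchingExps_edgeIdealD]
  constructor
  · rintro ⟨⟨a, b, hab, rfl⟩, -⟩
    exact ⟨a, b, hab.1, hab.2, rfl⟩
  · rintro ⟨a, b, hdir, hdisj, rfl⟩
    have hab : D.IsDirectedMatching a b := ⟨hdir, hdisj⟩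
    refine ⟨⟨a, b, hab, rfl⟩, ?_⟩
    rintro _ ⟨c, d, hcd, rfl⟩ hle
    exact hab.matchingExp_eq_of_le hpm hcd hle

/-- If every subgraph of the underlying graph of `D` has at most one
perfect matching and `1 ≤ k ≤ ν(I(D))`, then `u` is a minimal generator of `I(D)^{[k]}`
exactly when `u = x_{a_1} x_{b_1}^{w(b_1)} ⋯ x_{a_k} x_{b_k}^{w(b_k)}` for directed edges
`(a_i, b_i)` forming a matching of size `k`. -/
theorem minGens_matchingPower_iff (V : Type) [Fintype V] (K : Type) [Field K]
    (D : WOGraph V) (hpm : HasAtMostOnePerfectMatching D.graph)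
    (k : ℕ) (hk1 : 1 ≤ k) (hk2 : k ≤ monomialGrade (edgeIdealD K D)) (u : V →₀ ℕ) :
    u ∈ minGens (matchingPower (edgeIdealD K D) k) ↔
      ∃ a b : Fin k → V,
        (∀ i, D.dir (a i) (b i)) ∧
        (∀ i j, i ≠ j → a i ≠ a j ∧ a i ≠ b j ∧ b i ≠ a j ∧ b i ≠ b j) ∧
        u = ∑ i, (Finsupp.single (a i) 1 + Finsupp.single (b i) (D.w (b i))) :=
  minGens_matchingPower_iff_general V K D hpm k u

end MatchingPowers
end
end
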